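/- arXiv:2403.04641 — 3 statements merged into one kernel-verified Lean document; each statement's English description precedes it below -/
import Mathlib

section
/- For every alphabet 𝓐 of a propositional language and every logical matrix M = (V, D, I) for 𝓐 (with V a nonempty set of truth values, D a nonempty proper subset of V, and I interpreting each n-ary connective as a function Vⁿ → V), the pair (𝓐, ⊨_M), where Γ ⊨_M Δ iff every valuation in M that gives every formula of Γ a designated value gives some formula of Δ a designated value, is a uniform logic: ⊨_M satisfies overlap (if Γ ∩ Δ ≠ ∅ then Γ ⊨_M Δ), monotonicity, cut, substitution-invariance, non-triviality (there exist nonempty Γ, Δ with Γ ⊭_M Δ), and uniformity (if Γ ∪ Γ' ⊨_M Δ ∪ Δ' and the sets of propositional variables occurring in Γ ∪ Δ and in Γ' ∪ Δ' are disjoint, then Γ ⊨_M Δ or Γ' ⊨_M Δ'). -/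
/-!
STATEMENT 0: For every alphabet 𝓐 and every logical matrix M = (V, D, I) for 𝓐,
the consequence relation ⊨_M induced by M makes (𝓐, ⊨_M) a uniform logic:
overlap, monotonicity, cut, substitution-invariance, non-triviality, and uniformity.
-/

namespace BDPaper

/-- An alphabet of a propositional language: a countably infinite set of
propositional variables and, for each arity `n`, a finite set of `n`-ary
connectives (the sets being pairwise disjoint, which is automatic for types),
whose union is nonempty and finite. -/
structure Alphabet : Type 1 where
  PVar : Type
  Conn : ℕ → Type
  pvar_countable : Countable PVar
  pvar_infinite : Infinite PVar
  conn_finite : ∀ n, Finite (Conn n)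
  conn_nonempty : ∃ n, Nonempty (Conn n)
  conn_bounded : ∃ N, ∀ n, N ≤ n → IsEmpty (Conn n)

/-- Formulas over an alphabet. -/
inductive Formula (𝓐 : Alphabet) : Type where
  | var : 𝓐.PVar → Formula 𝓐
  | app : {n : ℕ} → 𝓐.Conn n → (Fin n → Formula 𝓐) → Formula 𝓐

/-- A logical matrix for an alphabet `𝓐`: a nonempty set of truth values `V`,
a nonempty proper subset `D` of designated values, and an interpretation of each
`n`-ary connective as an `n`-ary function on `V`. -/
structure Matrix' (𝓐 : Alphabet) : Type 1 where
  V : Type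
  D : Set V
  I : (n : ℕ) → 𝓐.Conn n → (Fin n → V) → V
  v_nonempty : Nonempty V
  d_nonempty : D.Nonempty
  d_proper : D ≠ Set.univ

/-- A valuation in a matrix: a function from formulas to truth values commuting
with the interpretations of the connectives. -/
def IsValuation {𝓐 : Alphabet} (M : Matrix' 𝓐) (ν : Formula 𝓐 → M.V) : Prop :=
  ∀ (n : ℕ) (c : 𝓐.Conn n) (args : Fin n → Formula 𝓐),
    ν (Formula.app c args) = M.I n c (fun i => ν (args i))

/-- The consequence relation induced by a matrix: `Γ ⊨_M Δ` iff every valuation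
giving every formula of `Γ` a designated value gives some formula of `Δ`
a designated value. -/
def Con {𝓐 : Alphabet} (M : Matrix' 𝓐) (Γ Δ : Set (Formula 𝓐)) : Prop :=
  ∀ ν : Formula 𝓐 → M.V, IsValuation M ν →
    (∀ A ∈ Γ, ν A ∈ M.D) → ∃ B ∈ Δ, ν B ∈ M.D

/-- Homomorphic extension of a substitution to all formulas. -/
def subst {𝓐 : Alphabet} (σ : 𝓐.PVar → Formula 𝓐) : Formula 𝓐 → Formula 𝓐
  | .var p => σ p
  | .app c args => .app c (fun i => subst σ (args i))

/-- The set of propositional variables occurring in a formula. -/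
def fvars {𝓐 : Alphabet} : Formula 𝓐 → Set 𝓐.PVar
  | .var p => {p}
  | .app _ args => ⋃ i, fvars (args i)

/-- Evaluation extending an assignment of variables. -/
def eval {𝓐 : Alphabet} (M : Matrix' 𝓐) (f : 𝓐.PVar → M.V) : Formula 𝓐 → M.V
  | .var p => f p
  | .app c args => M.I _ c (fun i => eval M f (args i))

lemma eval_isValuation {𝓐 : Alphabet} (M : Matrix' 𝓐) (f : 𝓐.PVar → M.V) :
    IsValuation M (eval M f) := fun _ _ _ => rfl

lemma subst_valuation {𝓐 : Alphabet} (M : Matrix' 𝓐) (ν : Formula 𝓐 → M.V)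
    (hν : IsValuation M ν) (σ : 𝓐.PVar → Formula 𝓐) :
    IsValuation M (fun A => ν (subst σ A)) := by
  intro n c args
  simp only [subst]
  exact hν n c _

lemma valuation_agree {𝓐 : Alphabet} (M : Matrix' 𝓐) (ν₁ ν₂ : Formula 𝓐 → M.V)
    (h₁ : IsValuation M ν₁) (h₂ : IsValuation M ν₂) :
    ∀ A : Formula 𝓐, (∀ p ∈ fvars A, ν₁ (Formula.var p) = ν₂ (Formula.var p)) →
      ν₁ A = ν₂ A := by
  intro A
  induction A with
  | var p => intro h; exact h p rfl
  | app c args ih =>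
    intro h
    rw [h₁ _ c args, h₂ _ c args]
    congr 1
    funext i
    exact ih i (fun p hp => h p (Set.mem_iUnion.2 ⟨i, hp⟩))

theorem stmt0 (𝓐 : Alphabet) (M : Matrix' 𝓐) :
    -- overlap
    (∀ Γ Δ : Set (Formula 𝓐), (Γ ∩ Δ).Nonempty → Con M Γ Δ) ∧
    -- monotonicity
    (∀ Γ Γ' Δ Δ' : Set (Formula 𝓐), Con M Γ Δ → Γ ⊆ Γ' → Δ ⊆ Δ' → Con M Γ' Δ') ∧
    -- cut
    (∀ (Γ Γ' Δ Δ' : Set (Formula 𝓐)) (A : Formula 𝓐),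
      Con M Γ (insert A Δ) → Con M (insert A Γ') Δ' → Con M (Γ ∪ Γ') (Δ ∪ Δ')) ∧
    -- substitution-invariance
    (∀ (Γ Δ : Set (Formula 𝓐)) (σ : 𝓐.PVar → Formula 𝓐),
      Con M Γ Δ → Con M (subst σ '' Γ) (subst σ '' Δ)) ∧
    -- non-triviality
    (∃ Γ Δ : Set (Formula 𝓐), Γ.Nonempty ∧ Δ.Nonempty ∧ ¬ Con M Γ Δ) ∧
    -- uniformity
    (∀ Γ Γ' Δ Δ' : Set (Formula 𝓐),
      Con M (Γ ∪ Γ') (Δ ∪ Δ') →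
      Disjoint (⋃ A ∈ Γ ∪ Δ, fvars A) (⋃ A ∈ Γ' ∪ Δ', fvars A) →
      Con M Γ Δ ∨ Con M Γ' Δ') := by
  classical
  refine ⟨?_, ?_, ?_, ?_, ?_, ?_⟩
  · -- overlap
    rintro Γ Δ ⟨A, hAΓ, hAΔ⟩ ν _ hΓ
    exact ⟨A, hAΔ, hΓ A hAΓ⟩
  · -- monotonicity
    intro Γ Γ' Δ Δ' h hΓ hΔ ν hν hsat
    obtain ⟨B, hB, hBD⟩ := h ν hν (fun A hA => hsat A (hΓ hA))
    exact ⟨B, hΔ hB, hBD⟩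
  · -- cut
    intro Γ Γ' Δ Δ' A h₁ h₂ ν hν hsat
    obtain ⟨B, hB, hBD⟩ := h₁ ν hν (fun C hC => hsat C (Or.inl hC))
    rcases hB with hB | hB
    · subst hB
      obtain ⟨B', hB', hB'D⟩ := h₂ ν hν (by
        rintro C (rfl | hC)
        · exact hBD
        · exact hsat C (Or.inr hC))
      exact ⟨B', Or.inr hB', hB'D⟩
    · exact ⟨B, Or.inl hB, hBD⟩
  · -- substitution-invariance
    intro Γ Δ σ h ν hν hsat
    obtain ⟨B, hB, hBD⟩ := h (fun A => ν (subst σ A)) (subst_valuation M ν hν σ)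
      (fun A hA => hsat _ ⟨A, hA, rfl⟩)
    exact ⟨subst σ B, ⟨B, hB, rfl⟩, hBD⟩
  · -- non-triviality
    obtain ⟨d, hd⟩ := M.d_nonempty
    obtain ⟨u, hu⟩ : ∃ u, u ∉ M.D := by
      by_contra h
      push_neg at h
      exact M.d_proper (Set.eq_univ_of_forall h)
    haveI := 𝓐.pvar_infinite
    obtain ⟨p, q, hpq⟩ := (exists_pair_ne 𝓐.PVar : ∃ p q : 𝓐.PVar, p ≠ q)
    refine ⟨{Formula.var p}, {Formula.var q}, ⟨_, rfl⟩, ⟨_, rfl⟩, ?_⟩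
    intro h
    obtain ⟨B, hB, hBD⟩ := h (eval M (fun r => if r = p then d else u))
      (eval_isValuation M _) (by
        rintro A rfl
        simp [eval, hd])
    rw [Set.mem_singleton_iff] at hB
    subst hB
    simp only [eval] at hBD
    rw [if_neg hpq.symm] at hBD
    exact hu hBD
  · -- uniformity
    intro Γ Γ' Δ Δ' h hdisj
    by_contra hcon
    push_neg at hcon
    obtain ⟨h₁, h₂⟩ := hcon
    simp only [Con, not_forall] at h₁ h₂
    obtain ⟨ν₁, hν₁, hsat₁, hno₁⟩ := h₁
    obtain ⟨ν₂, hν₂, hsat₂, hno₂⟩ := h₂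
    push_neg at hno₁ hno₂
    set V₁ : Set 𝓐.PVar := ⋃ A ∈ Γ ∪ Δ, fvars A with hV₁
    set f : 𝓐.PVar → M.V := fun p =>
      if p ∈ V₁ then ν₁ (Formula.var p) else ν₂ (Formula.var p) with hf
    have hval := eval_isValuation M f
    have agree₁ : ∀ A ∈ Γ ∪ Δ, eval M f A = ν₁ A := by
      intro A hA
      refine valuation_agree M _ _ hval hν₁ A ?_
      intro p hp
      have hpV₁ : p ∈ V₁ := Set.mem_biUnion hA hp
      show f p = _
      rw [hf]
      simp [hpV₁]
    have agree₂ : ∀ A ∈ Γ' ∪ Δ', eval M f A = ν₂ A := by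
      intro A hA
      refine valuation_agree M _ _ hval hν₂ A ?_
      intro p hp
      have hpV₂ : p ∈ ⋃ A ∈ Γ' ∪ Δ', fvars A := Set.mem_biUnion hA hp
      have hpV₁ : p ∉ V₁ := fun hc => Set.disjoint_left.1 hdisj hc hpV₂
      show f p = _
      rw [hf]
      simp [hpV₁]
    obtain ⟨B, hB, hBD⟩ := h (eval M f) hval (by
      rintro A (hA | hA)
      · rw [agree₁ A (Or.inl hA)]; exact hsat₁ A hA
      · rw [agree₂ A (Or.inl hA)]; exact hsat₂ A hA)
    rcases hB with hB | hB
    · rw [agree₁ B (Or.inr hB)] at hBD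
      exact hno₁ B hB hBD
    · rw [agree₂ B (Or.inr hB)] at hBD
      exact hno₂ B hB hBD

end BDPaper
end

section
/- For every alphabet 𝓐 and every finite logical matrix M for 𝓐 (i.e., one whose set of truth values is finite), the logic (𝓐, ⊨_M) is finitary: if Γ ⊨_M Δ then there exist finite subsets Γ' ⊆ Γ and Δ' ⊆ Δ with Γ' ⊨_M Δ'. -/
namespace BDPaper

/-!
Give the truth values the discrete topology. As they are finitely many, the space of all maps
from formulas to truth values is compact by Tychonoff, the valuations form a closed subspace, and
"`A` is designated" is a clopen condition. So `Γ ⊨_M Δ` says that inside a compact space the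
closed set of valuations designating all of `Γ` is covered by the open sets attached to `Δ`;
compactness, applied once to shrink `Δ` and once to shrink `Γ`, leaves finitely many formulas on
each side.
-/

open Set

theorem _root_.IsCompact.exists_finite_of_inter_biInter_subset_biUnion {X ι : Type*}
    [TopologicalSpace X] {s : Set X} (hs : IsCompact s) {F : ι → Set X} {Γ Δ : Set ι}
    (hΓ : ∀ i ∈ Γ, IsClosed (F i)) (hΔ : ∀ j ∈ Δ, IsOpen (F j))
    (h : s ∩ ⋂ i ∈ Γ, F i ⊆ ⋃ j ∈ Δ, F j) :
    ∃ Γ' ⊆ Γ, ∃ Δ' ⊆ Δ, Γ'.Finite ∧ Δ'.Finite ∧ s ∩ ⋂ i ∈ Γ', F i ⊆ ⋃ j ∈ Δ', F j := by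
  obtain ⟨Δ', hΔ'Δ, hΔ'fin, hΔ'⟩ :=
    (hs.inter_right (isClosed_biInter hΓ)).elim_finite_subcover_image hΔ h
  have hcover : s \ ⋃ j ∈ Δ', F j ⊆ ⋃ i ∈ Γ, (F i)ᶜ := by
    rintro x ⟨hxs, hxΔ'⟩
    by_contra hx
    simp only [mem_iUnion₂, mem_compl_iff, not_exists, not_not] at hx
    exact hxΔ' (hΔ' ⟨hxs, mem_iInter₂.2 hx⟩)
  obtain ⟨Γ', hΓ'Γ, hΓ'fin, hΓ'⟩ :=
    (hs.diff (isOpen_biUnion fun j hj => hΔ j (hΔ'Δ hj))).elim_finite_subcover_image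
      (fun i hi => (hΓ i hi).isOpen_compl) hcover
  refine ⟨Γ', hΓ'Γ, Δ', hΔ'Δ, hΓ'fin, hΔ'fin, ?_⟩
  rintro x ⟨hxs, hxΓ'⟩
  by_contra hxΔ'
  obtain ⟨i, hi, hxi⟩ := mem_iUnion₂.1 (hΓ' ⟨hxs, hxΔ'⟩)
  exact hxi (mem_iInter₂.1 hxΓ' i hi)

section

variable {𝓐 : Alphabet} (M : Matrix' 𝓐)

theorem con_iff_subset (Γ Δ : Set (Formula 𝓐)) :
    Con M Γ Δ ↔ {ν | IsValuation M ν} ∩ ⋂ A ∈ Γ, {ν | ν A ∈ M.D} ⊆ ⋃ B ∈ Δ, {ν | ν B ∈ M.D} := by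
  simp only [Con, subset_def, mem_inter_iff, mem_ofPred_eq, mem_iInter₂, mem_iUnion₂, exists_prop,
    and_imp]

theorem isClosed_setOf_isValuation [TopologicalSpace M.V] [DiscreteTopology M.V] :
    IsClosed {ν : Formula 𝓐 → M.V | IsValuation M ν} := by
  simp only [IsValuation, ofPred_forall]
  exact isClosed_iInter fun n => isClosed_iInter fun c => isClosed_iInter fun args =>
    isClosed_eq (continuous_apply _)
      (continuous_of_discreteTopology.comp (continuous_pi fun i => continuous_apply (args i)))

end

/-- the logic induced by a finite matrix is finitary. -/
theorem stmt1 (𝓐 : Alphabet) (M : Matrix' 𝓐) (hfin : Finite M.V) :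
    ∀ Γ Δ : Set (Formula 𝓐), Con M Γ Δ →
      ∃ Γ' Δ' : Set (Formula 𝓐),
        Γ' ⊆ Γ ∧ Δ' ⊆ Δ ∧ Γ'.Finite ∧ Δ'.Finite ∧ Con M Γ' Δ' := by
  intro Γ Δ hCon
  let _ : TopologicalSpace M.V := ⊥
  have : DiscreteTopology M.V := ⟨rfl⟩
  have hdesignated (A : Formula 𝓐) : IsClopen {ν : Formula 𝓐 → M.V | ν A ∈ M.D} :=
    (isClopen_discrete M.D).preimage (continuous_apply A)
  obtain ⟨Γ', hΓ'Γ, Δ', hΔ'Δ, hΓ'fin, hΔ'fin, hΓ'Δ'⟩ :=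
    (isClosed_setOf_isValuation M).isCompact.exists_finite_of_inter_biInter_subset_biUnion
      (fun A _ => (hdesignated A).isClosed) (fun B _ => (hdesignated B).isOpen)
      ((con_iff_subset M Γ Δ).1 hCon)
  exact ⟨Γ', Δ', hΓ'Γ, hΔ'Δ, hΓ'fin, hΔ'fin, (con_iff_subset M Γ' Δ').2 hΓ'Δ'⟩

end BDPaper
end

section
/- Let 𝓐 be an alphabet, M = (V, D, I) a simple matrix for 𝓐, and L = (𝓐, ⊨_M) the induced logic. Then for all formulas A₁, A₂: A₁ and A₂ are synonymous in L if and only if A₁ and A₂ are logically equivalent in M (i.e., ν(A₁) = ν(A₂) for every valuation ν in M). -/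
namespace BDPaper

/-- Matrix functions of a matrix: the functions on the truth values obtainable
by composition from the interpretations of the connectives and the projection
functions on finite cartesian powers of the set of truth values. -/
inductive IsMF {𝓐 : Alphabet} (M : Matrix' 𝓐) : {k : ℕ} → ((Fin k → M.V) → M.V) → Prop
  | proj {k : ℕ} (i : Fin k) : IsMF M (fun a => a i)
  | comp {k n : ℕ} (c : 𝓐.Conn n) (g : Fin n → ((Fin k → M.V) → M.V)) :
      (∀ i, IsMF M (g i)) → IsMF M (fun a => M.I n c (fun i => g i a))

/-- A simple matrix: whenever every matrix function sends a tuple `a` into the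
designated set exactly when it sends a tuple `b` there, then `a = b`. -/
def Simple {𝓐 : Alphabet} (M : Matrix' 𝓐) : Prop :=
  ∀ (k : ℕ) (a b : Fin k → M.V),
    (∀ f : (Fin k → M.V) → M.V, IsMF M f → (f a ∈ M.D ↔ f b ∈ M.D)) → a = b

/-- `Repl A₁ A₂ B₁ B₂` holds iff `B₂` is `B₁` with some or all occurrences of
`A₁` replaced by `A₂`. -/
inductive Repl {𝓐 : Alphabet} (A₁ A₂ : Formula 𝓐) : Formula 𝓐 → Formula 𝓐 → Prop
  | refl (B : Formula 𝓐) : Repl A₁ A₂ B B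
  | repl : Repl A₁ A₂ A₁ A₂
  | app {n : ℕ} (c : 𝓐.Conn n) (args₁ args₂ : Fin n → Formula 𝓐) :
      (∀ i, Repl A₁ A₂ (args₁ i) (args₂ i)) →
      Repl A₁ A₂ (Formula.app c args₁) (Formula.app c args₂)

/-- `A₁` and `A₂` are synonymous in the logic induced by `M`: for all formulas
`B₁`, `B₂` such that `B₂` is `B₁` with some or all occurrences of `A₁` replaced
by `A₂`, `B₁` and `B₂` are interderivable. -/
def Synonymous {𝓐 : Alphabet} (M : Matrix' 𝓐) (A₁ A₂ : Formula 𝓐) : Prop :=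
  ∀ B₁ B₂ : Formula 𝓐, Repl A₁ A₂ B₁ B₂ → Con M {B₁} {B₂} ∧ Con M {B₂} {B₁}

/-- Logical equivalence in the matrix `M`: every valuation gives the two
formulas the same truth value. -/
def LogEquiv {𝓐 : Alphabet} (M : Matrix' 𝓐) (A₁ A₂ : Formula 𝓐) : Prop :=
  ∀ ν : Formula 𝓐 → M.V, IsValuation M ν → ν A₁ = ν A₂

/-- for a simple matrix `M`, synonymity in the induced logic
coincides with logical equivalence in `M`. -/
theorem stmt3 (𝓐 : Alphabet) (M : Matrix' 𝓐) (hsimple : Simple M)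
    (A₁ A₂ : Formula 𝓐) :
    Synonymous M A₁ A₂ ↔ LogEquiv M A₁ A₂ := by
  constructor
  · intro hsyn ν hν
    have key : ∀ {k : ℕ} {f : (Fin k → M.V) → M.V}, IsMF M f →
        ∀ (C₁ C₂ : Fin k → Formula 𝓐), (∀ i, Repl A₁ A₂ (C₁ i) (C₂ i)) →
        ∃ B₁ B₂, Repl A₁ A₂ B₁ B₂ ∧ ν B₁ = f (fun i => ν (C₁ i)) ∧
          ν B₂ = f (fun i => ν (C₂ i)) := by
      intro k f hf
      induction hf with
      | proj i => intro C₁ C₂ h; exact ⟨C₁ i, C₂ i, h i, rfl, rfl⟩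
      | comp c g hg ih =>
        intro C₁ C₂ h
        choose B₁ B₂ hrepl h1 h2 using fun i => ih i C₁ C₂ h
        refine ⟨.app c B₁, .app c B₂, Repl.app c _ _ hrepl, ?_, ?_⟩
        · rw [hν]; simp only [h1]
        · rw [hν]; simp only [h2]
    have hab := hsimple 1 (fun _ => ν A₁) (fun _ => ν A₂) ?_
    · exact congrFun hab 0
    · intro f hf
      obtain ⟨B₁, B₂, hrepl, e1, e2⟩ := key hf (fun _ => A₁) (fun _ => A₂)
        (fun _ => Repl.repl)
      obtain ⟨c1, c2⟩ := hsyn B₁ B₂ hrepl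
      constructor
      · intro hfa
        obtain ⟨B, hB, hBd⟩ := c1 ν hν (by
          intro A hA
          have : A = B₁ := hA
          subst this; rwa [e1])
        have : B = B₂ := hB
        subst this; rwa [e2] at hBd
      · intro hfb
        obtain ⟨B, hB, hBd⟩ := c2 ν hν (by
          intro A hA
          have : A = B₂ := hA
          subst this; rwa [e2])
        have : B = B₁ := hB
        subst this; rwa [e1] at hBd
  · intro heq B₁ B₂ hrepl
    have key : ∀ ν, IsValuation M ν → ν B₁ = ν B₂ := by
      intro ν hν
      induction hrepl with
      | refl B => rfl
      | repl => exact heq ν hν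
      | app c a1 a2 h ih =>
        rw [hν, hν]
        congr 1
        funext i
        exact ih i
    constructor
    · intro ν hν h
      exact ⟨B₂, rfl, by rw [← key ν hν]; exact h B₁ rfl⟩
    · intro ν hν h
      exact ⟨B₁, rfl, by rw [key ν hν]; exact h B₂ rfl⟩

end BDPaper
end
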